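/- arXiv:1207.3403 — 5 statements merged into one kernel-verified Lean document; each statement's English description precedes it below -/
import Mathlib

section
/- Every f = h + conj(g) ∈ F_H^0 satisfies |h'(z)| + |g'(z)| ≤ 1 + |z| and |h'(z)| - |g'(z)| ≥ 1 - |z| for all z ∈ 𝔻. -/
/-!
The functions `h' - 1` and `g'` vanish at `0` and satisfy `|h' - 1| + |g'| < 1` on the disc, so a
Schwarz lemma for sums of moduli gives `|h'(z) - 1| + |g'(z)| ≤ |z|`; both bounds then follow from
the triangle inequality `| |h'(z)| - 1 | ≤ |h'(z) - 1|`.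
-/

open Metric Set

namespace Complex

lemma exists_norm_eq_one_norm_add_mul_eq (a b : ℂ) :
    ∃ c : ℂ, ‖c‖ = 1 ∧ ‖a + c * b‖ = ‖a‖ + ‖b‖ := by
  set c := exp (arg a * I) / exp (arg b * I)
  refine ⟨c, by simp only [c, norm_div, norm_exp_ofReal_mul_I, div_one], ?_⟩
  have hrot : c * exp (arg b * I) = exp (arg a * I) := div_mul_cancel₀ _ (exp_ne_zero _)
  have hsum : a + c * b = (‖a‖ + ‖b‖ : ℝ) * exp (arg a * I) := by
    push_cast
    linear_combination -norm_mul_exp_arg_mul_I a - c * norm_mul_exp_arg_mul_I b + (‖b‖ : ℂ) * hrot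
  rw [hsum, norm_mul, norm_exp_ofReal_mul_I, mul_one, norm_real, Real.norm_of_nonneg (by positivity)]

/-- Rotating `G` by the unimodular factor that aligns `F z` and `G z` reduces this to the usual
Schwarz lemma for `F + c * G`. -/
lemma norm_add_norm_le_norm_of_forall_norm_add_norm_le {F G : ℂ → ℂ} {R : ℝ} {z : ℂ}
    (hF : DifferentiableOn ℂ F (ball 0 R)) (hG : DifferentiableOn ℂ G (ball 0 R))
    (hF0 : F 0 = 0) (hG0 : G 0 = 0) (hbound : ∀ w ∈ ball (0 : ℂ) R, ‖F w‖ + ‖G w‖ ≤ R)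
    (hz : ‖z‖ < R) :
    ‖F z‖ + ‖G z‖ ≤ ‖z‖ := by
  obtain ⟨c, hc, hcz⟩ := exists_norm_eq_one_norm_add_mul_eq (F z) (G z)
  have hmaps : MapsTo (fun w ↦ F w + c * G w) (ball 0 R) (closedBall 0 R) := fun w hw ↦ by
    rw [mem_closedBall_zero_iff]
    calc ‖F w + c * G w‖ ≤ ‖F w‖ + ‖c * G w‖ := norm_add_le _ _
      _ = ‖F w‖ + ‖G w‖ := by rw [norm_mul, hc, one_mul]
      _ ≤ R := hbound w hw
  rw [← hcz]
  exact norm_le_norm_of_mapsTo_ball (hF.add (hG.const_mul c)) hmaps (by simp [hF0, hG0]) hz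

end Complex

theorem derivative_growth_bounds_general
    (h g : ℂ → ℂ)
    (hh : DifferentiableOn ℂ h (ball (0:ℂ) 1))
    (hg : DifferentiableOn ℂ g (ball (0:ℂ) 1))
    (h1 : deriv h 0 = 1) (g1 : deriv g 0 = 0)
    (hineq : ∀ z ∈ ball (0:ℂ) 1, ‖deriv h z - 1‖ < 1 - ‖deriv g z‖) :
    ∀ z ∈ ball (0:ℂ) 1,
      ‖deriv h z‖ + ‖deriv g z‖ ≤ 1 + ‖z‖ ∧ 1 - ‖z‖ ≤ ‖deriv h z‖ - ‖deriv g z‖ := by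
  intro z hz
  have hh' : DifferentiableOn ℂ (deriv h) (ball 0 1) :=
    (hh.analyticOnNhd isOpen_ball).deriv.differentiableOn
  have hg' : DifferentiableOn ℂ (deriv g) (ball 0 1) :=
    (hg.analyticOnNhd isOpen_ball).deriv.differentiableOn
  have schwarz : ‖deriv h z - 1‖ + ‖deriv g z‖ ≤ ‖z‖ :=
    Complex.norm_add_norm_le_norm_of_forall_norm_add_norm_le (hh'.sub_const 1) hg'
      (by rw [h1, sub_self]) g1 (fun w hw ↦ by linarith [hineq w hw]) (mem_ball_zero_iff.mp hz)
  have upper : ‖deriv h z‖ ≤ 1 + ‖deriv h z - 1‖ := by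
    simpa using norm_le_norm_add_norm_sub' (deriv h z) 1
  have lower : 1 - ‖deriv h z - 1‖ ≤ ‖deriv h z‖ := by
    have := norm_sub_norm_le (1 : ℂ) (deriv h z)
    rw [norm_one, norm_sub_rev] at this
    linarith
  constructor <;> linarith

theorem derivative_growth_bounds
    (h g : ℂ → ℂ)
    (hh : DifferentiableOn ℂ h (ball (0:ℂ) 1))
    (hg : DifferentiableOn ℂ g (ball (0:ℂ) 1))
    (h0 : h 0 = 0) (h1 : deriv h 0 = 1) (g0 : g 0 = 0) (g1 : deriv g 0 = 0)
    (hineq : ∀ z ∈ ball (0:ℂ) 1, ‖deriv h z - 1‖ < 1 - ‖deriv g z‖) :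
    ∀ z ∈ ball (0:ℂ) 1,
      ‖deriv h z‖ + ‖deriv g z‖ ≤ 1 + ‖z‖ ∧ 1 - ‖z‖ ≤ ‖deriv h z‖ - ‖deriv g z‖ :=
  derivative_growth_bounds_general h g hh hg h1 g1 hineq
end

section
/- Every f = h + conj(g) ∈ F_H^0 satisfies the growth upper bound |f(z)| ≤ |z| + |z|²/2 for all z ∈ 𝔻. -/
/-!
For `‖c‖ ≤ 1` the function `h' - 1 + c g'` maps the unit disc into itself and vanishes at `0`,
so by the Schwarz lemma `‖h'(w) + c g'(w) - 1‖ ≤ ‖w‖`. Choosing the unimodular `c` with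
`‖h(z) + c g(z)‖ = ‖h(z)‖ + ‖g(z)‖` and integrating along the segment `[0, z]` gives
`‖h(z) + c g(z) - z‖ ≤ ‖z‖² / 2`, hence `‖f(z)‖ ≤ ‖h(z)‖ + ‖g(z)‖ ≤ ‖z‖ + ‖z‖² / 2`.
-/

open Metric

-- `c` rotates `b` onto the direction of `a`.
theorem Complex.exists_norm_eq_one_norm_add_mul_eq_s6 (a b : ℂ) :
    ∃ c : ℂ, ‖c‖ = 1 ∧ ‖a + c * b‖ = ‖a‖ + ‖b‖ := by
  set c := Complex.exp ((a.arg - b.arg : ℝ) * Complex.I)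
  have hrot : c * Complex.exp (b.arg * Complex.I) = Complex.exp (a.arg * Complex.I) := by
    rw [← Complex.exp_add]; push_cast; ring_nf
  have hsum : a + c * b = ((‖a‖ + ‖b‖ : ℝ) : ℂ) * Complex.exp (a.arg * Complex.I) := by
    push_cast
    linear_combination -(Complex.norm_mul_exp_arg_mul_I a)
      - c * Complex.norm_mul_exp_arg_mul_I b + (‖b‖ : ℂ) * hrot
  refine ⟨c, Complex.norm_exp_ofReal_mul_I _, ?_⟩
  rw [hsum, norm_mul, Complex.norm_exp_ofReal_mul_I, mul_one, Complex.norm_real,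
    Real.norm_of_nonneg (by positivity)]

theorem norm_le_sq_div_two_of_norm_deriv_le_norm {E : Type*} [NormedAddCommGroup E]
    [NormedSpace ℂ E] {G : ℂ → E} {R : ℝ} (hG : DifferentiableOn ℂ G (ball 0 R))
    (hG0 : G 0 = 0) (hG' : ∀ w ∈ ball (0 : ℂ) R, ‖deriv G w‖ ≤ ‖w‖) {z : ℂ}
    (hz : z ∈ ball (0 : ℂ) R) : ‖G z‖ ≤ ‖z‖ ^ 2 / 2 := by
  have hseg : ∀ t ∈ Set.Icc (0 : ℝ) 1, (t : ℂ) * z ∈ ball (0 : ℂ) R := fun t ht => by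
    simpa [Complex.real_smul] using
      (convex_ball (0 : ℂ) R).smul_mem_of_zero_mem (mem_ball_self (pos_of_mem_ball hz)) hz ht
  have hderiv : ∀ t ∈ Set.Icc (0 : ℝ) 1,
      HasDerivAt (fun s : ℝ => G (s * z)) (z • deriv G (t * z)) t := fun t ht => by
    have hpath : HasDerivAt (fun s : ℝ => (s : ℂ) * z) z t := by
      simpa using (hasDerivAt_id t).ofReal_comp.mul_const z
    exact ((hG.differentiableAt (isOpen_ball.mem_nhds (hseg t ht))).hasDerivAt).scomp t hpath
  have hB : ∀ t : ℝ, HasDerivAt (fun t : ℝ => t ^ 2 * ‖z‖ ^ 2 / 2) (t * ‖z‖ ^ 2) t := fun t =>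
    (((hasDerivAt_pow 2 t).mul_const (‖z‖ ^ 2)).div_const 2).congr_deriv (by norm_num; ring)
  have hbound : ∀ t ∈ Set.Ico (0 : ℝ) 1, ‖z • deriv G (t * z)‖ ≤ t * ‖z‖ ^ 2 := fun t ht =>
    calc ‖z • deriv G (t * z)‖ = ‖z‖ * ‖deriv G (t * z)‖ := norm_smul _ _
      _ ≤ ‖z‖ * ‖(t : ℂ) * z‖ := by gcongr; exact hG' _ (hseg t (Set.Ico_subset_Icc_self ht))
      _ = t * ‖z‖ ^ 2 := by rw [norm_mul, Complex.norm_real, Real.norm_of_nonneg ht.1]; ring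
  simpa using image_norm_le_of_norm_deriv_right_le_deriv_boundary
    (fun t ht => (hderiv t ht).continuousAt.continuousWithinAt)
    (fun t ht => (hderiv t (Set.Ico_subset_Icc_self ht)).hasDerivWithinAt)
    (by simp [hG0]) hB hbound (Set.right_mem_Icc.mpr zero_le_one)

theorem norm_deriv_add_mul_deriv_sub_one_le {h g : ℂ → ℂ}
    (hh : DifferentiableOn ℂ h (ball (0 : ℂ) 1)) (hg : DifferentiableOn ℂ g (ball (0 : ℂ) 1))
    (h1 : deriv h 0 = 1) (g1 : deriv g 0 = 0)
    (hineq : ∀ z ∈ ball (0 : ℂ) 1, ‖deriv h z - 1‖ < 1 - ‖deriv g z‖) {c : ℂ} (hc : ‖c‖ ≤ 1)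
    {w : ℂ} (hw : w ∈ ball (0 : ℂ) 1) : ‖deriv h w + c * deriv g w - 1‖ ≤ ‖w‖ := by
  have hd : DifferentiableOn ℂ (fun x => deriv h x + c * deriv g x - 1) (ball (0 : ℂ) 1) :=
    (((hh.analyticOnNhd isOpen_ball).deriv.differentiableOn).add
      (((hg.analyticOnNhd isOpen_ball).deriv.differentiableOn).const_mul c)).sub_const 1
  refine Complex.norm_le_norm_of_mapsTo_ball hd (fun x hx => ?_) (by simp [h1, g1])
    (mem_ball_zero_iff.mp hw)
  rw [mem_closedBall_zero_iff]
  calc ‖deriv h x + c * deriv g x - 1‖ = ‖(deriv h x - 1) + c * deriv g x‖ := by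
        rw [add_sub_right_comm]
    _ ≤ ‖deriv h x - 1‖ + ‖c‖ * ‖deriv g x‖ := (norm_add_le _ _).trans_eq (by rw [norm_mul])
    _ ≤ 1 := by nlinarith [hineq x hx, norm_nonneg (deriv g x)]

theorem growth_upper_bound
    (h g : ℂ → ℂ)
    (hh : DifferentiableOn ℂ h (ball (0:ℂ) 1))
    (hg : DifferentiableOn ℂ g (ball (0:ℂ) 1))
    (h0 : h 0 = 0) (h1 : deriv h 0 = 1) (g0 : g 0 = 0) (g1 : deriv g 0 = 0)
    (hineq : ∀ z ∈ ball (0:ℂ) 1, ‖deriv h z - 1‖ < 1 - ‖deriv g z‖) :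
    ∀ z ∈ ball (0:ℂ) 1,
      ‖h z + (starRingEnd ℂ) (g z)‖ ≤ ‖z‖ + ‖z‖ ^ 2 / 2 := by
  intro z hz
  obtain ⟨c, hc, hcz⟩ := Complex.exists_norm_eq_one_norm_add_mul_eq_s6 (h z) (g z)
  have hF : DifferentiableOn ℂ (fun w => h w + c * g w - w) (ball (0 : ℂ) 1) :=
    (hh.add (hg.const_mul c)).sub differentiableOn_id
  have hF' : ∀ w ∈ ball (0 : ℂ) 1, ‖deriv (fun w => h w + c * g w - w) w‖ ≤ ‖w‖ := by
    intro w hw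
    have hFw : HasDerivAt (fun w => h w + c * g w - w) (deriv h w + c * deriv g w - 1) w :=
      (((hh.differentiableAt (isOpen_ball.mem_nhds hw)).hasDerivAt.add
        ((hg.differentiableAt (isOpen_ball.mem_nhds hw)).hasDerivAt.const_mul c)).sub
        (hasDerivAt_id w))
    rw [hFw.deriv]
    exact norm_deriv_add_mul_deriv_sub_one_le hh hg h1 g1 hineq hc.le hw
  have hFz := norm_le_sq_div_two_of_norm_deriv_le_norm hF (by simp [h0, g0]) hF' hz
  calc ‖h z + (starRingEnd ℂ) (g z)‖ ≤ ‖h z‖ + ‖g z‖ := by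
        simpa using norm_add_le (h z) ((starRingEnd ℂ) (g z))
    _ = ‖(h z + c * g z - z) + z‖ := by rw [sub_add_cancel, hcz]
    _ ≤ ‖z‖ + ‖z‖ ^ 2 / 2 := by linarith [norm_add_le (h z + c * g z - z) z]
end

section
/- Every f = h + conj(g) ∈ F_H^0 is Lipschitz on 𝔻 with Lipschitz constant 2: |f(z₁) - f(z₂)| ≤ 2|z₁ - z₂| for all z₁, z₂ ∈ 𝔻. In particular f extends continuously to the closed unit disk. -/
open Metric

theorem lipschitz_and_boundary_extension
    (h g : ℂ → ℂ)
    (hh : DifferentiableOn ℂ h (ball (0:ℂ) 1))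
    (hg : DifferentiableOn ℂ g (ball (0:ℂ) 1))
    (h0 : h 0 = 0) (h1 : deriv h 0 = 1) (g0 : g 0 = 0) (g1 : deriv g 0 = 0)
    (hineq : ∀ z ∈ ball (0:ℂ) 1, ‖deriv h z - 1‖ < 1 - ‖deriv g z‖) :
    (∀ z₁ ∈ ball (0:ℂ) 1, ∀ z₂ ∈ ball (0:ℂ) 1,
      ‖(h z₁ + (starRingEnd ℂ) (g z₁)) - (h z₂ + (starRingEnd ℂ) (g z₂))‖
        ≤ 2 * ‖z₁ - z₂‖) ∧
    ∃ F : ℂ → ℂ, ContinuousOn F (closedBall (0:ℂ) 1) ∧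
      ∀ z ∈ ball (0:ℂ) 1, F z = h z + (starRingEnd ℂ) (g z) := by
  set s : Set ℂ := ball (0:ℂ) 1 with hs
  set f : ℂ → ℂ := fun z => h z + (starRingEnd ℂ) (g z) with hf
  -- the real-linear derivative of f
  set f' : ℂ → (ℂ →L[ℝ] ℂ) := fun w =>
    (ContinuousLinearMap.restrictScalars ℝ
      (ContinuousLinearMap.smulRight (1 : ℂ →L[ℂ] ℂ) (deriv h w))) +
    (Complex.conjCLE.toContinuousLinearMap).comp
      (ContinuousLinearMap.restrictScalars ℝ
        (ContinuousLinearMap.smulRight (1 : ℂ →L[ℂ] ℂ) (deriv g w)))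
    with hf'
  have hderiv : ∀ w ∈ s, HasFDerivWithinAt f (f' w) s w := by
    intro w hw
    have hhw : HasDerivAt h (deriv h w) w :=
      (hh.differentiableAt (isOpen_ball.mem_nhds hw)).hasDerivAt
    have hgw : HasDerivAt g (deriv g w) w :=
      (hg.differentiableAt (isOpen_ball.mem_nhds hw)).hasDerivAt
    have h1' := (hhw.hasFDerivAt).restrictScalars ℝ
    have hg' := (hgw.hasFDerivAt).restrictScalars ℝ
    have h2' : HasFDerivAt (fun z => (starRingEnd ℂ) (g z))
        ((Complex.conjCLE.toContinuousLinearMap).comp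
          (ContinuousLinearMap.restrictScalars ℝ
            (ContinuousLinearMap.smulRight (1 : ℂ →L[ℂ] ℂ) (deriv g w)))) w :=
      (Complex.conjCLE.toContinuousLinearMap.hasFDerivAt).comp w hg'
    exact ((h1'.add h2')).hasFDerivWithinAt
  have hbound : ∀ w ∈ s, ‖f' w‖ ≤ 2 := by
    intro w hw
    have key : ‖deriv h w‖ + ‖deriv g w‖ ≤ 2 := by
      have := hineq w hw
      have h3 : ‖deriv h w‖ ≤ ‖deriv h w - 1‖ + 1 := by
        calc ‖deriv h w‖ = ‖(deriv h w - 1) + 1‖ := by ring_nf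
          _ ≤ ‖deriv h w - 1‖ + ‖(1:ℂ)‖ := norm_add_le _ _
          _ = ‖deriv h w - 1‖ + 1 := by simp
      linarith
    apply ContinuousLinearMap.opNorm_le_bound _ (by norm_num)
    intro v
    have : ‖f' w v‖ ≤ (‖deriv h w‖ + ‖deriv g w‖) * ‖v‖ := by
      have hv' : f' w v = deriv h w * v + (starRingEnd ℂ) (deriv g w * v) := by
        simp [hf', Complex.conjCLE, mul_comm]
      rw [hv']
      calc ‖deriv h w * v + (starRingEnd ℂ) (deriv g w * v)‖
          ≤ ‖deriv h w * v‖ + ‖(starRingEnd ℂ) (deriv g w * v)‖ := norm_add_le _ _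
        _ = ‖deriv h w‖ * ‖v‖ + ‖deriv g w‖ * ‖v‖ := by
            rw [RCLike.norm_conj]; simp [norm_mul]
        _ = (‖deriv h w‖ + ‖deriv g w‖) * ‖v‖ := by ring
    calc ‖f' w v‖ ≤ (‖deriv h w‖ + ‖deriv g w‖) * ‖v‖ := this
      _ ≤ 2 * ‖v‖ := by
          have hv : (0:ℝ) ≤ ‖v‖ := norm_nonneg _
          nlinarith [key, hv]
  have hlip : ∀ z₁ ∈ s, ∀ z₂ ∈ s, ‖f z₁ - f z₂‖ ≤ 2 * ‖z₁ - z₂‖ := by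
    intro z₁ h₁ z₂ h₂
    exact (convex_ball (0:ℂ) 1).norm_image_sub_le_of_norm_hasFDerivWithin_le
      hderiv hbound h₂ h₁
  refine ⟨hlip, ?_⟩
  -- extend componentwise using the fact that f is Lipschitz on s
  have hlipOn : LipschitzOnWith 2 f s := by
    apply LipschitzOnWith.of_dist_le_mul
    intro x hx y hy
    simpa [dist_eq_norm] using hlip x hx y hy
  have hre : LipschitzOnWith 2 (fun z => (f z).re) s := by
    apply LipschitzOnWith.of_dist_le_mul
    intro x hx y hy
    calc dist (f x).re (f y).re = |(f x).re - (f y).re| := Real.dist_eq _ _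
      _ = |(f x - f y).re| := by simp [Complex.sub_re]
      _ ≤ ‖f x - f y‖ := Complex.abs_re_le_norm _
      _ = dist (f x) (f y) := (dist_eq_norm _ _).symm
      _ ≤ 2 * dist x y := by
          have := hlipOn.dist_le_mul x hx y hy; simpa using this
  have him : LipschitzOnWith 2 (fun z => (f z).im) s := by
    apply LipschitzOnWith.of_dist_le_mul
    intro x hx y hy
    calc dist (f x).im (f y).im = |(f x).im - (f y).im| := Real.dist_eq _ _
      _ = |(f x - f y).im| := by simp [Complex.sub_im]
      _ ≤ ‖f x - f y‖ := Complex.abs_im_le_norm _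
      _ = dist (f x) (f y) := (dist_eq_norm _ _).symm
      _ ≤ 2 * dist x y := by
          have := hlipOn.dist_le_mul x hx y hy; simpa using this
  obtain ⟨Fre, hFre_lip, hFre_eq⟩ := hre.extend_real
  obtain ⟨Fim, hFim_lip, hFim_eq⟩ := him.extend_real
  refine ⟨fun z => (Fre z : ℂ) + (Fim z : ℂ) * Complex.I, ?_, ?_⟩
  · apply Continuous.continuousOn
    exact (Complex.continuous_ofReal.comp hFre_lip.continuous).add
      ((Complex.continuous_ofReal.comp hFim_lip.continuous).mul continuous_const)
  · intro z hz
    have e1 : Fre z = (f z).re := (hFre_eq hz).symm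
    have e2 : Fim z = (f z).im := (hFim_eq hz).symm
    show (Fre z : ℂ) + (Fim z : ℂ) * Complex.I = f z
    rw [e1, e2, Complex.re_add_im]
end

section
/- Let f = h + conj(g) with h, g analytic on 𝔻. Suppose for every |μ|=1 the function h + μg is injective on a set S ⊆ 𝔻. Then f is injective on S. (Key step: if f(z₁)=f(z₂) with h(z₁)≠h(z₂), setting θ = arg(h(z₁)-h(z₂)) one gets F_μ(z₁)=F_μ(z₂) with μ = e^{2iθ}.) -/
open Metric

theorem injectivity_from_shears
    (h g : ℂ → ℂ) (S : Set ℂ)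
    (hh : DifferentiableOn ℂ h (ball (0:ℂ) 1))
    (hg : DifferentiableOn ℂ g (ball (0:ℂ) 1))
    (hS : S ⊆ ball (0:ℂ) 1)
    (hinj : ∀ μ : ℂ, ‖μ‖ = 1 → Set.InjOn (fun z => h z + μ * g z) S) :
    Set.InjOn (fun z => h z + (starRingEnd ℂ) (g z)) S := by
  intro z₁ h₁ z₂ h₂ heq
  simp only at heq
  by_cases hb : g z₁ = g z₂
  · have hhz : h z₁ = h z₂ := by
      have : (starRingEnd ℂ) (g z₁) = (starRingEnd ℂ) (g z₂) := by rw [hb]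
      linear_combination heq - this
    exact hinj 1 (by simp) h₁ h₂ (by simp [hhz, hb])
  · set b := g z₁ - g z₂ with hbdef
    have hb0 : b ≠ 0 := sub_ne_zero.mpr hb
    set μ := (starRingEnd ℂ) b / b with hμdef
    have hμ : ‖μ‖ = 1 := by
      rw [hμdef, norm_div, RCLike.norm_conj, div_self (norm_ne_zero_iff.mpr hb0)]
    refine hinj μ hμ h₁ h₂ ?_
    have hconj : h z₁ - h z₂ = -(starRingEnd ℂ) b := by
      have : (starRingEnd ℂ) b = (starRingEnd ℂ) (g z₁) - (starRingEnd ℂ) (g z₂) := by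
        rw [hbdef, map_sub]
      linear_combination heq + this
    have hμb : μ * b = (starRingEnd ℂ) b := by
      rw [hμdef, div_mul_cancel₀ _ hb0]
    simp only
    linear_combination hconj + hμb
end

section
/- Let h(z)=z+∑_{n≥2}a_n z^n, g(z)=∑_{n≥2}b_n z^n and 0 < λ ≤ 1. If ∑_{n≥2} n²(|a_n| + |b_n|) ≤ λ, then ∑_{n≥2} n(|a_n|+|b_n|) ≤ λ/2, hence f = h + conj(g) ∈ F_H^0(λ/2); moreover with β = 2(1-λ)/(2+λ), ∑_{n≥2} [ (n(n-β)/(1-β))|a_n| + (n(n+β)/(1-β))|b_n| ] ≤ 1 (so f is convex of order β by Jahangiri's criterion). -/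
open Metric

theorem square_coefficient_condition
    (a b : ℕ → ℂ) (h g : ℂ → ℂ) (lam : ℝ)
    (hlam : 0 < lam) (hlam1 : lam ≤ 1)
    (hh : DifferentiableOn ℂ h (ball (0:ℂ) 1))
    (hg : DifferentiableOn ℂ g (ball (0:ℂ) 1))
    (hrep : ∀ z ∈ ball (0:ℂ) 1, h z = z + ∑' n : ℕ, a (n + 2) * z ^ (n + 2))
    (grep : ∀ z ∈ ball (0:ℂ) 1, g z = ∑' n : ℕ, b (n + 2) * z ^ (n + 2))
    (hsum : Summable (fun n : ℕ => ((n + 2 : ℝ)) ^ 2 * (‖a (n + 2)‖ + ‖b (n + 2)‖)))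
    (hbound : ∑' n : ℕ, ((n + 2 : ℝ)) ^ 2 * (‖a (n + 2)‖ + ‖b (n + 2)‖) ≤ lam) :
    (Summable (fun n : ℕ => (n + 2 : ℝ) * (‖a (n + 2)‖ + ‖b (n + 2)‖)) ∧
     ∑' n : ℕ, (n + 2 : ℝ) * (‖a (n + 2)‖ + ‖b (n + 2)‖) ≤ lam / 2) ∧
    (∀ z ∈ ball (0:ℂ) 1, ‖deriv h z - 1‖ < lam / 2 - ‖deriv g z‖) ∧
    (Summable (fun n : ℕ =>
      ((n + 2 : ℝ) * ((n + 2 : ℝ) - 2 * (1 - lam) / (2 + lam)) / (1 - 2 * (1 - lam) / (2 + lam))) * ‖a (n + 2)‖ +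
      ((n + 2 : ℝ) * ((n + 2 : ℝ) + 2 * (1 - lam) / (2 + lam)) / (1 - 2 * (1 - lam) / (2 + lam))) * ‖b (n + 2)‖) ∧
     ∑' n : ℕ,
      (((n + 2 : ℝ) * ((n + 2 : ℝ) - 2 * (1 - lam) / (2 + lam)) / (1 - 2 * (1 - lam) / (2 + lam))) * ‖a (n + 2)‖ +
       ((n + 2 : ℝ) * ((n + 2 : ℝ) + 2 * (1 - lam) / (2 + lam)) / (1 - 2 * (1 - lam) / (2 + lam))) * ‖b (n + 2)‖) ≤ 1) := by
  have hc2 : ∀ n : ℕ, (2:ℝ) ≤ (n + 2 : ℝ) := fun n => by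
    have : (0:ℝ) ≤ (n:ℝ) := Nat.cast_nonneg n
    linarith
  have hnn : ∀ n : ℕ, 0 ≤ ‖a (n+2)‖ + ‖b (n+2)‖ := fun n => by positivity
  -- Part 1
  have hS1 : Summable (fun n : ℕ => (n + 2 : ℝ) * (‖a (n + 2)‖ + ‖b (n + 2)‖)) := by
    apply Summable.of_nonneg_of_le (fun n => by positivity) (fun n => ?_) hsum
    nlinarith [mul_nonneg (mul_nonneg (by linarith [hc2 n] : (0:ℝ) ≤ (n + 2 : ℝ))
      (by linarith [hc2 n] : (0:ℝ) ≤ (n + 2 : ℝ) - 1)) (hnn n)]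
  have hB1 : ∑' n : ℕ, (n + 2 : ℝ) * (‖a (n + 2)‖ + ‖b (n + 2)‖) ≤ lam / 2 := by
    have step : ∀ n : ℕ, (n + 2 : ℝ) * (‖a (n + 2)‖ + ‖b (n + 2)‖) ≤
        (1/2) * (((n + 2 : ℝ)) ^ 2 * (‖a (n + 2)‖ + ‖b (n + 2)‖)) := fun n => by
      nlinarith [mul_nonneg (mul_nonneg (by linarith [hc2 n] : (0:ℝ) ≤ (n + 2 : ℝ))
        (by linarith [hc2 n] : (0:ℝ) ≤ (n + 2 : ℝ) - 2)) (hnn n)]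
    calc ∑' n : ℕ, (n + 2 : ℝ) * (‖a (n + 2)‖ + ‖b (n + 2)‖)
        ≤ ∑' n : ℕ, (1/2) * (((n + 2 : ℝ)) ^ 2 * (‖a (n + 2)‖ + ‖b (n + 2)‖)) :=
          Summable.tsum_le_tsum step hS1 (hsum.mul_left _)
      _ = (1/2) * ∑' n : ℕ, ((n + 2 : ℝ)) ^ 2 * (‖a (n + 2)‖ + ‖b (n + 2)‖) := tsum_mul_left
      _ ≤ lam / 2 := by linarith
  -- summability of the separate derivative-coefficient series
  have hSa : Summable (fun n : ℕ => (n + 2 : ℝ) * ‖a (n + 2)‖) := by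
    apply Summable.of_nonneg_of_le (fun n => by positivity) (fun n => ?_) hS1
    have := hc2 n
    nlinarith [norm_nonneg (a (n+2)), norm_nonneg (b (n+2))]
  have hSb : Summable (fun n : ℕ => (n + 2 : ℝ) * ‖b (n + 2)‖) := by
    apply Summable.of_nonneg_of_le (fun n => by positivity) (fun n => ?_) hS1
    have := hc2 n
    nlinarith [norm_nonneg (a (n+2)), norm_nonneg (b (n+2))]
  -- generic derivative lemma for such power series
  have key : ∀ (c : ℕ → ℂ), Summable (fun n : ℕ => (n + 2 : ℝ) * ‖c (n + 2)‖) →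
      ∀ z ∈ ball (0:ℂ) 1,
      HasDerivAt (fun w : ℂ => ∑' n : ℕ, c (n + 2) * w ^ (n + 2))
        (∑' n : ℕ, c (n + 2) * (((n:ℂ) + 2) * z ^ (n + 1))) z := by
    intro c hSc z hz
    apply hasDerivAt_tsum_of_isPreconnected hSc isOpen_ball
      (convex_ball (0:ℂ) 1).isPreconnected
      (g := fun n w => c (n + 2) * w ^ (n + 2))
      (g' := fun n w => c (n + 2) * (((n:ℂ) + 2) * w ^ (n + 1)))
      (y₀ := (0:ℂ))
    · intro n y _
      have hp := (hasDerivAt_pow (n+2) y).const_mul (c (n+2))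
      have : ((n + 2 : ℕ) : ℂ) * y ^ (n + 2 - 1) = ((n:ℂ) + 2) * y ^ (n + 1) := by
        push_cast
        norm_num
      rwa [this] at hp
    · intro n y hy
      have hy1 : ‖y‖ < 1 := by simpa [mem_ball_zero_iff] using hy
      have hpow : ‖y‖ ^ (n+1) ≤ 1 := pow_le_one₀ (norm_nonneg y) hy1.le
      have hnc : ‖((n:ℂ) + 2)‖ = (n + 2 : ℝ) := by
        have : ((n:ℂ) + 2) = ((n + 2 : ℕ) : ℂ) := by push_cast; ring
        rw [this, Complex.norm_natCast]
        push_cast; ring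
      rw [norm_mul, norm_mul, norm_pow, hnc]
      have h1 : (n + 2 : ℝ) * ‖y‖ ^ (n+1) ≤ (n + 2 : ℝ) * 1 :=
        mul_le_mul_of_nonneg_left hpow (by linarith [hc2 n])
      calc ‖c (n+2)‖ * ((n + 2 : ℝ) * ‖y‖ ^ (n+1)) ≤ ‖c (n+2)‖ * ((n + 2 : ℝ) * 1) :=
            mul_le_mul_of_nonneg_left h1 (norm_nonneg _)
        _ = (n + 2 : ℝ) * ‖c (n+2)‖ := by ring
    · exact mem_ball_self one_pos
    · simpa using summable_zero
    · exact hz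
  -- norm bound for the derivative series
  have keybd : ∀ (c : ℕ → ℂ) (S : ℝ), Summable (fun n : ℕ => (n + 2 : ℝ) * ‖c (n + 2)‖) →
      (∑' n : ℕ, (n + 2 : ℝ) * ‖c (n + 2)‖) = S →
      ∀ z : ℂ, ‖z‖ < 1 →
      ‖∑' n : ℕ, c (n + 2) * (((n:ℂ) + 2) * z ^ (n + 1))‖ ≤ S * ‖z‖ := by
    intro c S hSc hSeq z hz1
    have hs : HasSum (fun n : ℕ => ((n + 2 : ℝ) * ‖c (n + 2)‖) * ‖z‖) (S * ‖z‖) := by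
      exact hSeq ▸ hSc.hasSum.mul_right ‖z‖
    apply tsum_of_norm_bounded hs
    intro n
    have hnc : ‖((n:ℂ) + 2)‖ = (n + 2 : ℝ) := by
      have : ((n:ℂ) + 2) = ((n + 2 : ℕ) : ℂ) := by push_cast; ring
      rw [this, Complex.norm_natCast]
      push_cast; ring
    rw [norm_mul, norm_mul, norm_pow, hnc]
    have hpow : ‖z‖ ^ (n+1) ≤ ‖z‖ := by
      calc ‖z‖ ^ (n+1) = ‖z‖ ^ n * ‖z‖ := by ring
        _ ≤ 1 * ‖z‖ := by
            apply mul_le_mul_of_nonneg_right (pow_le_one₀ (norm_nonneg z) hz1.le) (norm_nonneg z)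
        _ = ‖z‖ := one_mul _
    calc ‖c (n+2)‖ * ((n + 2 : ℝ) * ‖z‖ ^ (n+1)) ≤ ‖c (n+2)‖ * ((n + 2 : ℝ) * ‖z‖) := by
          apply mul_le_mul_of_nonneg_left _ (norm_nonneg _)
          exact mul_le_mul_of_nonneg_left hpow (by linarith [hc2 n])
      _ = ((n + 2 : ℝ) * ‖c (n+2)‖) * ‖z‖ := by ring
  refine ⟨⟨hS1, hB1⟩, ?_, ?_⟩
  · -- Part 2
    intro z hz
    have hz1 : ‖z‖ < 1 := by simpa [mem_ball_zero_iff] using hz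
    -- derivative of h
    have hda := key a hSa z hz
    have hdh : HasDerivAt (fun w : ℂ => w + ∑' n : ℕ, a (n + 2) * w ^ (n + 2))
        (1 + ∑' n : ℕ, a (n + 2) * (((n:ℂ) + 2) * z ^ (n + 1))) z :=
      (hasDerivAt_id z).add hda
    have hEqh : h =ᶠ[nhds z] (fun w : ℂ => w + ∑' n : ℕ, a (n + 2) * w ^ (n + 2)) := by
      filter_upwards [isOpen_ball.mem_nhds hz] with w hw using hrep w hw
    have hderivh : deriv h z = 1 + ∑' n : ℕ, a (n + 2) * (((n:ℂ) + 2) * z ^ (n + 1)) := by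
      rw [hEqh.deriv_eq, hdh.deriv]
    have hdb := key b hSb z hz
    have hEqg : g =ᶠ[nhds z] (fun w : ℂ => ∑' n : ℕ, b (n + 2) * w ^ (n + 2)) := by
      filter_upwards [isOpen_ball.mem_nhds hz] with w hw using grep w hw
    have hderivg : deriv g z = ∑' n : ℕ, b (n + 2) * (((n:ℂ) + 2) * z ^ (n + 1)) := by
      rw [hEqg.deriv_eq, hdb.deriv]
    have hba := keybd a _ hSa rfl z hz1
    have hbb := keybd b _ hSb rfl z hz1
    have hsplit : (∑' n : ℕ, (n + 2 : ℝ) * ‖a (n + 2)‖) + (∑' n : ℕ, (n + 2 : ℝ) * ‖b (n + 2)‖)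
        = ∑' n : ℕ, (n + 2 : ℝ) * (‖a (n + 2)‖ + ‖b (n + 2)‖) := by
      rw [← Summable.tsum_add hSa hSb]
      congr 1
      ext n
      ring
    have hSsum : (∑' n : ℕ, (n + 2 : ℝ) * ‖a (n + 2)‖) + (∑' n : ℕ, (n + 2 : ℝ) * ‖b (n + 2)‖)
        ≤ lam / 2 := by rw [hsplit]; exact hB1
    have hzfin : (lam / 2) * ‖z‖ < lam / 2 := by
      nlinarith [norm_nonneg z]
    have hnormh : ‖deriv h z - 1‖ ≤ (∑' n : ℕ, (n + 2 : ℝ) * ‖a (n + 2)‖) * ‖z‖ := by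
      rw [hderivh]
      simpa using hba
    have hnormg : ‖deriv g z‖ ≤ (∑' n : ℕ, (n + 2 : ℝ) * ‖b (n + 2)‖) * ‖z‖ := by
      rw [hderivg]; exact hbb
    have hSa0 : 0 ≤ ∑' n : ℕ, (n + 2 : ℝ) * ‖a (n + 2)‖ :=
      tsum_nonneg fun n => by positivity
    have hSb0 : 0 ≤ ∑' n : ℕ, (n + 2 : ℝ) * ‖b (n + 2)‖ :=
      tsum_nonneg fun n => by positivity
    nlinarith [norm_nonneg z, norm_nonneg (deriv g z)]
  · -- Part 3
    set β : ℝ := 2 * (1 - lam) / (2 + lam) with hβ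
    have h2lam : (0:ℝ) < 2 + lam := by linarith
    have hβ0 : 0 ≤ β := by
      apply div_nonneg _ h2lam.le
      linarith
    have hβ1 : β ≤ 1 := by
      rw [hβ, div_le_one h2lam]
      linarith
    have h1β : 0 < 1 - β := by
      rw [hβ, sub_pos, div_lt_one h2lam]
      linarith
    have hkey : ∀ n : ℕ, lam * ((n + 2 : ℝ) * ((n + 2 : ℝ) + β)) ≤ ((n + 2 : ℝ))^2 * (1 - β) := by
      intro n
      have h2 : 1 - lam - β = lam * β / 2 := by
        rw [hβ]
        field_simp
        ring
      nlinarith [hc2 n, mul_nonneg (mul_nonneg hlam.le hβ0)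
        (by nlinarith [hc2 n] : (0:ℝ) ≤ (n + 2 : ℝ) * ((n + 2 : ℝ) - 2))]
    -- termwise bound
    have hterm : ∀ n : ℕ,
        ((n + 2 : ℝ) * ((n + 2 : ℝ) - β) / (1 - β)) * ‖a (n + 2)‖ +
        ((n + 2 : ℝ) * ((n + 2 : ℝ) + β) / (1 - β)) * ‖b (n + 2)‖ ≤
        (1 / lam) * (((n + 2 : ℝ))^2 * (‖a (n + 2)‖ + ‖b (n + 2)‖)) := by
      intro n
      have hcoef : (n + 2 : ℝ) * ((n + 2 : ℝ) + β) / (1 - β) ≤ ((n + 2 : ℝ))^2 / lam := by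
        rw [div_le_div_iff₀ h1β hlam]
        nlinarith [hkey n]
      have hcoef' : (n + 2 : ℝ) * ((n + 2 : ℝ) - β) / (1 - β) ≤ ((n + 2 : ℝ))^2 / lam := by
        refine le_trans ?_ hcoef
        gcongr
        nlinarith [hc2 n]
      have ha0 := norm_nonneg (a (n+2))
      have hb0 := norm_nonneg (b (n+2))
      calc ((n + 2 : ℝ) * ((n + 2 : ℝ) - β) / (1 - β)) * ‖a (n + 2)‖ +
            ((n + 2 : ℝ) * ((n + 2 : ℝ) + β) / (1 - β)) * ‖b (n + 2)‖
          ≤ (((n + 2 : ℝ))^2 / lam) * ‖a (n + 2)‖ + (((n + 2 : ℝ))^2 / lam) * ‖b (n + 2)‖ := by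
            apply add_le_add
            · exact mul_le_mul_of_nonneg_right hcoef' ha0
            · exact mul_le_mul_of_nonneg_right hcoef hb0
        _ = (1 / lam) * (((n + 2 : ℝ))^2 * (‖a (n + 2)‖ + ‖b (n + 2)‖)) := by ring
    have htermnn : ∀ n : ℕ, 0 ≤
        ((n + 2 : ℝ) * ((n + 2 : ℝ) - β) / (1 - β)) * ‖a (n + 2)‖ +
        ((n + 2 : ℝ) * ((n + 2 : ℝ) + β) / (1 - β)) * ‖b (n + 2)‖ := by
      intro n
      have h1 : (0:ℝ) ≤ (n + 2 : ℝ) * ((n + 2 : ℝ) - β) / (1 - β) := by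
        apply div_nonneg _ h1β.le
        have := hc2 n
        nlinarith
      have h2 : (0:ℝ) ≤ (n + 2 : ℝ) * ((n + 2 : ℝ) + β) / (1 - β) := by
        apply div_nonneg _ h1β.le
        have := hc2 n
        nlinarith
      positivity
    have hS3 : Summable (fun n : ℕ =>
        ((n + 2 : ℝ) * ((n + 2 : ℝ) - β) / (1 - β)) * ‖a (n + 2)‖ +
        ((n + 2 : ℝ) * ((n + 2 : ℝ) + β) / (1 - β)) * ‖b (n + 2)‖) :=
      Summable.of_nonneg_of_le htermnn hterm (hsum.mul_left _)
    refine ⟨hS3, ?_⟩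
    calc (∑' n : ℕ,
        (((n + 2 : ℝ) * ((n + 2 : ℝ) - β) / (1 - β)) * ‖a (n + 2)‖ +
         ((n + 2 : ℝ) * ((n + 2 : ℝ) + β) / (1 - β)) * ‖b (n + 2)‖))
        ≤ ∑' n : ℕ, (1 / lam) * (((n + 2 : ℝ))^2 * (‖a (n + 2)‖ + ‖b (n + 2)‖)) :=
          Summable.tsum_le_tsum hterm hS3 (hsum.mul_left _)
      _ = (1 / lam) * ∑' n : ℕ, ((n + 2 : ℝ))^2 * (‖a (n + 2)‖ + ‖b (n + 2)‖) := tsum_mul_left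
      _ ≤ (1 / lam) * lam := by
          apply mul_le_mul_of_nonneg_left hbound
          positivity
      _ = 1 := by field_simp
end
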